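/- With the partition construction of G and B, set σ = Σ_{S : S induces a spanning tree of G and E_r ⊆ S} det(B_S), and for x > 0 set Z(x) = Σ_{S : S induces a spanning tree of G} x^{2|S ∩ E_r|} · det(B_S). Suppose ε ∈ (0,1) and there is an index set S̃ inducing a spanning tree of G with E_r ⊆ S̃ and det(B_{S̃}) > 0, and put x = (det(B + I) / det(B_{S̃})) · (2/ε). Then x^{2m} · σ ≤ Z(x) ≤ e^{ε/2} · x^{2m} · σ. -/

import Mathlib

open scoped Classical

/-- The principal minor of `A` on the index set `S` (equal to `1` when `S = ∅`). -/
noncomputable def principalMinor {ι : Type*} [DecidableEq ι]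
    (A : Matrix ι ι ℝ) (S : Finset ι) : ℝ :=
  (A.submatrix (fun i : ↥S => (i : ι)) (fun i : ↥S => (i : ι))).det

/-- The edge of the graph `G` associated with an edge index in `Fin m ⊕ Fin m`:
the left edge `{v_{g j}, w_{g j, j}}` and the right edge `{w_{g j, j}, v_{g j + 1}}`. -/
def partEdge {n m : ℕ} (g : Fin m → Fin n) : (Fin m ⊕ Fin m) → Sym2 (Fin (n + 1) ⊕ Fin m)
  | Sum.inl j => s(Sum.inl (g j).castSucc, Sum.inr j)
  | Sum.inr j => s(Sum.inr j, Sum.inl (g j).succ)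

/-- The spanning subgraph of `G` whose edges are those indexed by `S ⊆ Fin m ⊕ Fin m`. -/
def partSubgraph {n m : ℕ} (g : Fin m → Fin n) (S : Finset (Fin m ⊕ Fin m)) :
    SimpleGraph (Fin (n + 1) ⊕ Fin m) :=
  SimpleGraph.fromEdgeSet (partEdge g '' ↑S)

/-- The matrix `B` of the construction: the left-left block is `A`, the right-right block is
the identity, and the off-diagonal blocks vanish. -/
def matB {m : ℕ} (A : Matrix (Fin m) (Fin m) ℝ) :
    Matrix (Fin m ⊕ Fin m) (Fin m ⊕ Fin m) ℝ :=
  Matrix.of fun p q =>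
    match p, q with
    | Sum.inl j₁, Sum.inl j₂ => A j₁ j₂
    | Sum.inr j, Sum.inr j' => if j = j' then 1 else 0
    | _, _ => 0

/-- The set `E_ℓ` of left edge indices. -/
def leftIdx (m : ℕ) : Finset (Fin m ⊕ Fin m) := Finset.univ.image Sum.inl

/-- The set `E_r` of right edge indices. -/
def rightIdx (m : ℕ) : Finset (Fin m ⊕ Fin m) := Finset.univ.image Sum.inr

/-!
Every principal minor of the positive semidefinite matrix `B` is nonnegative and they sum to
`det (B + I)`. A spanning tree missing a right edge has weight at most `x ^ (2m - 2)`, so all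
of them together contribute at most `x ^ (2m - 2) det (B + I)`, while the trees containing
`E_r` contribute `x ^ (2m) σ ≥ x ^ (2m) det B_{S̃}`. The choice of `x` makes the ratio of the
two at most `ε / 2`, and `1 + ε / 2 ≤ exp (ε / 2)`.
-/

open Finset

open Matrix in
lemma det_of_piecewise_one_eq_principalMinor {ι : Type*} [Fintype ι] [DecidableEq ι]
    (M : Matrix ι ι ℝ) (s : Finset ι) :
    (of (s.piecewise (of.symm M) (of.symm (1 : Matrix ι ι ℝ)))).det = principalMinor M s := by
  set e : {i // i ∈ s} ⊕ {i // i ∉ s} ≃ ι := Equiv.sumCompl (· ∈ s)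
  have hblocks : (of (s.piecewise (of.symm M) (of.symm (1 : Matrix ι ι ℝ)))).submatrix e e =
      fromBlocks (M.submatrix (fun i : ↥s => (i : ι)) (fun i : ↥s => (i : ι)))
        (M.submatrix (fun i : ↥s => (i : ι)) (fun i : {i // i ∉ s} => (i : ι))) 0 1 := by
    ext (i | i) (j | j)
    · simp [e]
    · simp [e]
    · have hij : (i : ι) ≠ j := fun h => i.2 (h ▸ j.2)
      simp [e, piecewise_eq_of_notMem _ _ _ i.2, one_apply, hij]
    · simp [e, piecewise_eq_of_notMem _ _ _ i.2, one_apply, Subtype.ext_iff]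
  rw [← det_submatrix_equiv_self e, hblocks, det_fromBlocks_zero₂₁, det_one, mul_one,
    principalMinor]

/-- Multilinearity of the determinant in the rows of `M + 1`. -/
lemma det_add_one_eq_sum_principalMinor {ι : Type*} [Fintype ι] [DecidableEq ι]
    (M : Matrix ι ι ℝ) :
    (M + 1).det = ∑ S : Finset ι, principalMinor M S := by
  have hrows : (M + 1).det = (Matrix.detRowAlternating : (ι → ℝ) [⋀^ι]→ₗ[ℝ] ℝ).toMultilinearMap
      (Matrix.of.symm M + Matrix.of.symm (1 : Matrix ι ι ℝ)) := rfl
  rw [hrows, MultilinearMap.map_add_univ]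
  exact sum_congr rfl fun s _ => det_of_piecewise_one_eq_principalMinor M s

lemma Matrix.PosSemidef.principalMinor_nonneg {ι : Type*} [Fintype ι] [DecidableEq ι]
    {M : Matrix ι ι ℝ} (hM : M.PosSemidef) (S : Finset ι) : 0 ≤ principalMinor M S :=
  (hM.submatrix _).det_nonneg

lemma matB_eq_fromBlocks {m : ℕ} (A : Matrix (Fin m) (Fin m) ℝ) :
    matB A = Matrix.fromBlocks A 0 0 1 := by
  ext (i | i) (j | j) <;> simp [matB, Matrix.one_apply]

lemma posSemidef_matB {m : ℕ} {A : Matrix (Fin m) (Fin m) ℝ} (hA : A.PosSemidef) :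
    (matB A).PosSemidef := by
  have : Invertible (1 : Matrix (Fin m) (Fin m) ℝ) := invertibleOne
  have hblocks := Matrix.PosDef.fromBlocks₂₂ A (0 : Matrix (Fin m) (Fin m) ℝ)
    (Matrix.PosDef.one (n := Fin m) (R := ℝ))
  simp only [Matrix.conjTranspose_zero, Matrix.zero_mul, sub_zero] at hblocks
  rw [matB_eq_fromBlocks]
  exact hblocks.mpr hA

lemma card_rightIdx (m : ℕ) : (rightIdx m).card = m := by
  simp [rightIdx, card_image_of_injective _ Sum.inr_injective]

section WeightedSum

variable {α : Type*} [DecidableEq α] (T : Finset (Finset α)) (E : Finset α)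
  {f : Finset α → ℝ} {x : ℝ}

lemma sum_filter_subset_pow_card_inter_mul :
    ∑ S ∈ T with E ⊆ S, x ^ (2 * #(S ∩ E)) * f S = x ^ (2 * #E) * ∑ S ∈ T with E ⊆ S, f S := by
  rw [mul_sum]
  refine sum_congr rfl fun S hS => ?_
  rw [inter_eq_right.mpr (mem_filter.mp hS).2]

lemma pow_card_mul_sum_filter_subset_le_sum_pow_card_inter_mul (hf : ∀ S, 0 ≤ f S) :
    x ^ (2 * #E) * ∑ S ∈ T with E ⊆ S, f S ≤ ∑ S ∈ T, x ^ (2 * #(S ∩ E)) * f S := by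
  rw [← sum_filter_subset_pow_card_inter_mul]
  exact sum_le_sum_of_subset_of_nonneg (filter_subset _ _) fun S _ _ =>
    mul_nonneg ((even_two_mul _).pow_nonneg x) (hf S)

/-- Every `S` missing an element of `E` loses at least one factor `x ^ 2`. -/
lemma sq_mul_sum_pow_card_inter_mul_le (hf : ∀ S, 0 ≤ f S) (hx : 1 ≤ x) :
    x ^ 2 * ∑ S ∈ T, x ^ (2 * #(S ∩ E)) * f S ≤
      x ^ 2 * (x ^ (2 * #E) * ∑ S ∈ T with E ⊆ S, f S) + x ^ (2 * #E) * ∑ S ∈ T, f S := by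
  rw [← sum_filter_add_sum_filter_not T (E ⊆ ·), sum_filter_subset_pow_card_inter_mul, mul_add]
  have hmissing : x ^ 2 * ∑ S ∈ T with ¬E ⊆ S, x ^ (2 * #(S ∩ E)) * f S ≤
      x ^ (2 * #E) * ∑ S ∈ T with ¬E ⊆ S, f S := by
    rw [mul_sum, mul_sum]
    refine sum_le_sum fun S hS => ?_
    have hlt : #(S ∩ E) < #E :=
      card_lt_card (ssubset_of_subset_of_ne inter_subset_right
        fun h => (mem_filter.mp hS).2 (inter_eq_right.mp h))
    rw [← mul_assoc, ← pow_add]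
    exact mul_le_mul_of_nonneg_right (pow_le_pow_right₀ hx (by omega)) (hf S)
  refine add_le_add_right (hmissing.trans (mul_le_mul_of_nonneg_left ?_ ?_)) _
  · exact sum_le_sum_of_subset_of_nonneg (filter_subset _ _) fun S _ _ => hf S
  · exact (even_two_mul _).pow_nonneg x

end WeightedSum

lemma le_exp_half_mul_of_sq_mul_le {x ε P Q R : ℝ} (hx : x ≠ 0) (hP : 0 ≤ P)
    (hQ : x ^ 2 * Q ≤ x ^ 2 * P + R) (hR : R ≤ x ^ 2 * (ε / 2 * P)) :
    Q ≤ Real.exp (ε / 2) * P :=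
  calc Q ≤ (1 + ε / 2) * P :=
      le_of_mul_le_mul_left (a := x ^ 2) (by linarith) (by positivity)
    _ ≤ Real.exp (ε / 2) * P :=
      mul_le_mul_of_nonneg_right (by linarith [Real.add_one_le_exp (ε / 2)]) hP

theorem part_spanningTree_Z_bounds_general {n m : ℕ}
    (g : Fin m → Fin n)
    (A : Matrix (Fin m) (Fin m) ℝ) (hA : A.PosSemidef)
    (ε : ℝ) (hε0 : 0 < ε) (hε1 : ε < 1)
    (St : Finset (Fin m ⊕ Fin m)) (hSt : (partSubgraph g St).IsTree)
    (hStr : rightIdx m ⊆ St) (hStpos : 0 < principalMinor (matB A) St)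
    (x σ : ℝ) (Z : ℝ → ℝ)
    (hx : x = (matB A + 1).det / principalMinor (matB A) St * (2 / ε))
    (hσ : σ = ∑ S ∈ Finset.univ.filter (fun S : Finset (Fin m ⊕ Fin m) =>
        (partSubgraph g S).IsTree ∧ rightIdx m ⊆ S),
      principalMinor (matB A) S)
    (hZ : ∀ t : ℝ, Z t = ∑ S ∈ Finset.univ.filter (fun S : Finset (Fin m ⊕ Fin m) =>
        (partSubgraph g S).IsTree),
      t ^ (2 * (S ∩ rightIdx m).card) * principalMinor (matB A) S) :
    x ^ (2 * m) * σ ≤ Z x ∧ Z x ≤ Real.exp (ε / 2) * (x ^ (2 * m) * σ) := by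
  set B := matB A
  set d := principalMinor B St
  set δ := (B + 1).det
  set T := univ.filter fun S : Finset (Fin m ⊕ Fin m) => (partSubgraph g S).IsTree
  have hf : ∀ S, 0 ≤ principalMinor B S := (posSemidef_matB hA).principalMinor_nonneg
  have hδ : δ = ∑ S, principalMinor B S := det_add_one_eq_sum_principalMinor B
  have hdδ : d ≤ δ := hδ ▸ single_le_sum (fun S _ => hf S) (mem_univ St)
  have hTδ : ∑ S ∈ T, principalMinor B S ≤ δ :=
    hδ ▸ sum_le_sum_of_subset_of_nonneg (subset_univ T) fun S _ _ => hf S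
  have hσ' : σ = ∑ S ∈ T with rightIdx m ⊆ S, principalMinor B S := by rw [hσ, filter_filter]
  have hdσ : d ≤ σ := hσ ▸ single_le_sum (fun S _ => hf S) (by simp [hSt, hStr])
  have hx1 : 1 ≤ x := hx ▸ one_le_mul_of_one_le_of_one_le ((one_le_div hStpos).mpr hdδ)
    ((one_le_div hε0).mpr (by linarith))
  have hxd : x * ε * d = 2 * δ := by rw [hx]; field_simp
  have hlow := pow_card_mul_sum_filter_subset_le_sum_pow_card_inter_mul T (rightIdx m) hf (x := x)
  have hsq := sq_mul_sum_pow_card_inter_mul_le T (rightIdx m) hf hx1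
  rw [← hσ', card_rightIdx] at hlow hsq
  rw [hZ]
  refine ⟨hlow, le_exp_half_mul_of_sq_mul_le (zero_lt_one.trans_le hx1).ne'
    (mul_nonneg (by positivity) (hStpos.le.trans hdσ)) hsq ?_⟩
  calc x ^ (2 * m) * ∑ S ∈ T, principalMinor B S ≤ x ^ (2 * m) * δ := by gcongr
    _ = x ^ (2 * m) * (x * ε * d / 2) := by rw [hxd]; ring
    _ ≤ x ^ (2 * m) * (x ^ 2 * ε * σ / 2) := by gcongr; exact le_self_pow₀ hx1 two_ne_zero
    _ = x ^ 2 * (ε / 2 * (x ^ (2 * m) * σ)) := by ring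

/-- For the partition construction, with `σ` the sum of `det (B_S)` over spanning trees
containing `E_r` and `Z x` the spanning-tree DPP normalizing constant of the rescaled matrix,
the choice `x = det(B + I)/det(B_{S̃}) · (2/ε)` gives `x^{2m} σ ≤ Z x ≤ e^{ε/2} x^{2m} σ`. -/
theorem part_spanningTree_Z_bounds {n m : ℕ} (hn : 1 ≤ n) (hm : 1 ≤ m)
    (g : Fin m → Fin n) (hg : Function.Surjective g)
    (A : Matrix (Fin m) (Fin m) ℝ) (hA : A.PosSemidef)
    (ε : ℝ) (hε0 : 0 < ε) (hε1 : ε < 1)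
    (St : Finset (Fin m ⊕ Fin m)) (hSt : (partSubgraph g St).IsTree)
    (hStr : rightIdx m ⊆ St) (hStpos : 0 < principalMinor (matB A) St)
    (x σ : ℝ) (Z : ℝ → ℝ)
    (hx : x = (matB A + 1).det / principalMinor (matB A) St * (2 / ε))
    (hσ : σ = ∑ S ∈ Finset.univ.filter (fun S : Finset (Fin m ⊕ Fin m) =>
        (partSubgraph g S).IsTree ∧ rightIdx m ⊆ S),
      principalMinor (matB A) S)
    (hZ : ∀ t : ℝ, Z t = ∑ S ∈ Finset.univ.filter (fun S : Finset (Fin m ⊕ Fin m) =>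
        (partSubgraph g S).IsTree),
      t ^ (2 * (S ∩ rightIdx m).card) * principalMinor (matB A) S) :
    x ^ (2 * m) * σ ≤ Z x ∧ Z x ≤ Real.exp (ε / 2) * (x ^ (2 * m) * σ) :=
  part_spanningTree_Z_bounds_general g A hA ε hε0 hε1 St hSt hStr hStpos x σ Z hx hσ hZ
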